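/- Let m > 1/2, α ≥ 0 and set C_m = (2m-1)^{-1/2}. Then for all j ∈ ℕ and all measurable f : [0,∞) → ℝ with ∫_0^∞ |f(z)|² ρ_j(z) dz < ∞, one has sup_{y ≥ 0} (ρ_j(y)/ρ_0(y))^{1/2} ∫_0^y |f(z)| dz ≤ C_m (∫_0^∞ |f|² ρ_j)^{1/2}. -/

import Mathlib

open MeasureTheory

/-- The weight functions `ρ_j(y) = (1+y)^{2m} ∏_{k=1}^j (1 + y/k^α)^{-2}`. -/
noncomputable def rho (m α : ℝ) (j : ℕ) (y : ℝ) : ℝ :=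
  (1 + y) ^ (2 * m) * ∏ k ∈ Finset.Icc 1 j, ((1 + y / (k : ℝ) ^ α) ^ 2)⁻¹

/-!
Weighted Cauchy–Schwarz on `(0, y]` gives
`∫₀^y |f| ≤ (∫₀^y f² ρ_j)^{1/2} (∫₀^y ρ_j⁻¹)^{1/2}`. Because `ρ_j / ρ_0` is non-increasing,
`(ρ_j / ρ_0)(y) · ρ_j(z)⁻¹ ≤ ρ_0(z)⁻¹ = (1 + z)^{-2m}` for `z ≤ y`, and the integral of
`(1 + z)^{-2m}` over `(0, ∞)` is `1 / (2m - 1)`.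
-/

open Set

theorem integral_abs_le_sqrt_mul_sqrt_of_weight {X : Type*} [MeasurableSpace X] {μ : Measure X}
    {f w : X → ℝ} (hw_meas : AEStronglyMeasurable w μ) (hw : ∀ᵐ x ∂μ, 0 < w x)
    (hfw : Integrable (fun x => f x ^ 2 * w x) μ) (hw_inv : Integrable (fun x => (w x)⁻¹) μ) :
    ∫ x, |f x| ∂μ ≤ √(∫ x, f x ^ 2 * w x ∂μ) * √(∫ x, (w x)⁻¹ ∂μ) := by
  set g := fun x => √(f x ^ 2 * w x)
  set h := fun x => (√(w x))⁻¹
  have hg_sq : (fun x => g x ^ 2) =ᵐ[μ] fun x => f x ^ 2 * w x := by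
    filter_upwards [hw] with x hx
    exact Real.sq_sqrt (by positivity)
  have hh_sq : (fun x => h x ^ 2) =ᵐ[μ] fun x => (w x)⁻¹ := by
    filter_upwards [hw] with x hx
    rw [inv_pow, Real.sq_sqrt hx.le]
  have hg : MemLp g (ENNReal.ofReal 2) μ := by
    rw [ENNReal.ofReal_ofNat,
      memLp_two_iff_integrable_sq (Real.continuous_sqrt.comp_aestronglyMeasurable hfw.1)]
    exact hfw.congr hg_sq.symm
  have hh : MemLp h (ENNReal.ofReal 2) μ := by
    rw [ENNReal.ofReal_ofNat, memLp_two_iff_integrable_sq (by unfold h; fun_prop)]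
    exact hw_inv.congr hh_sq.symm
  have hgh : (fun x => |f x|) =ᵐ[μ] fun x => g x * h x := by
    filter_upwards [hw] with x hx
    simp only [g, h]
    rw [Real.sqrt_mul (sq_nonneg _), Real.sqrt_sq_eq_abs,
      mul_inv_cancel_right₀ (Real.sqrt_pos.2 hx).ne']
  have holder := integral_mul_le_Lp_mul_Lq_of_nonneg Real.HolderConjugate.two_two
    (ae_of_all _ fun _ => Real.sqrt_nonneg _)
    (ae_of_all _ fun _ => inv_nonneg.2 (Real.sqrt_nonneg _)) hg hh
  simp only [Real.rpow_two, ← Real.sqrt_eq_rpow] at holder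
  rwa [integral_congr_ae hgh, ← integral_congr_ae hg_sq, ← integral_congr_ae hh_sq]

theorem integral_one_add_rpow_neg_le {r y : ℝ} (hr : 1 < r) (hy : 0 ≤ y) :
    ∫ z in (0:ℝ)..y, (1 + z) ^ (-r) ≤ 1 / (r - 1) := by
  have h0 : (0:ℝ) ∉ uIcc 1 (1 + y) := fun h => by
    rcases mem_uIcc.1 h with ⟨h1, _⟩ | ⟨_, h2⟩ <;> linarith
  rw [intervalIntegral.integral_comp_add_left (fun u => u ^ (-r)), add_zero,
    integral_rpow (Or.inr ⟨by linarith, h0⟩), Real.one_rpow,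
    show -r + 1 = -(r - 1) by ring, div_neg, ← neg_div, neg_sub]
  gcongr
  exact sub_le_self _ (by positivity)

noncomputable def rhoRatio (α : ℝ) (j : ℕ) (y : ℝ) : ℝ :=
  ∏ k ∈ Finset.Icc 1 j, ((1 + y / (k : ℝ) ^ α) ^ 2)⁻¹

section Weights

variable {m α : ℝ} {j : ℕ} {y : ℝ}

theorem one_add_div_rpow_pos (hy : 0 ≤ y) {k : ℕ} (hk : 1 ≤ k) : 0 < 1 + y / (k : ℝ) ^ α := by
  have : 0 < (k : ℝ) ^ α := Real.rpow_pos_of_pos (by exact_mod_cast hk) α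
  positivity

theorem rhoRatio_pos (hy : 0 ≤ y) : 0 < rhoRatio α j y :=
  Finset.prod_pos fun k hk => by
    have := one_add_div_rpow_pos (α := α) hy (Finset.mem_Icc.1 hk).1
    positivity

theorem rhoRatio_antitoneOn : AntitoneOn (rhoRatio α j) (Ici 0) := by
  intro z hz y _ hzy
  refine Finset.prod_le_prod (fun k _ => by positivity) fun k hk => ?_
  have hk1 := (Finset.mem_Icc.1 hk).1
  have := one_add_div_rpow_pos (α := α) hz hk1
  have : 0 < (k : ℝ) ^ α := Real.rpow_pos_of_pos (by exact_mod_cast hk1) α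
  gcongr

theorem rho_eq_mul_rhoRatio : rho m α j y = (1 + y) ^ (2 * m) * rhoRatio α j y := rfl

theorem rho_div_rho_zero (hy : -1 < y) : rho m α j y / rho m α 0 y = rhoRatio α j y := by
  have : (1 + y) ^ (2 * m) ≠ 0 := (Real.rpow_pos_of_pos (by linarith) _).ne'
  simp [rho_eq_mul_rhoRatio, rhoRatio, this]

theorem rho_pos (hy : 0 ≤ y) : 0 < rho m α j y :=
  mul_pos (Real.rpow_pos_of_pos (by linarith) _) (rhoRatio_pos hy)

theorem continuousOn_rho : ContinuousOn (rho m α j) (Ici 0) := by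
  refine ContinuousOn.mul ?_ (continuousOn_finsetProd _ fun k hk => ?_)
  · exact ContinuousOn.rpow_const (by fun_prop) fun z hz => Or.inl (by simp at hz; linarith)
  · refine ContinuousOn.inv₀ (by fun_prop) fun z hz => ?_
    have := one_add_div_rpow_pos (α := α) hz (Finset.mem_Icc.1 hk).1
    positivity

theorem intervalIntegrable_inv_rho (hy : 0 ≤ y) :
    IntervalIntegrable (fun z => (rho m α j z)⁻¹) volume 0 y := by
  refine ContinuousOn.intervalIntegrable
    (ContinuousOn.inv₀ (continuousOn_rho.mono ?_) fun z hz => ?_)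
  · simp [uIcc_of_le hy, Icc_subset_Ici_self]
  · rw [uIcc_of_le hy] at hz
    exact (rho_pos hz.1).ne'

theorem rhoRatio_mul_integral_inv_rho_le (hm : 1 / 2 < m) (hy : 0 ≤ y) :
    rhoRatio α j y * ∫ z in (0:ℝ)..y, (rho m α j z)⁻¹ ≤ 1 / (2 * m - 1) := by
  rw [← intervalIntegral.integral_const_mul]
  refine le_trans (intervalIntegral.integral_mono_on hy ?_ ?_ fun z hz => ?_)
    (integral_one_add_rpow_neg_le (r := 2 * m) (by linarith) hy)
  · exact (intervalIntegrable_inv_rho hy).const_mul _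
  · refine ContinuousOn.intervalIntegrable (ContinuousOn.rpow_const (by fun_prop) fun z hz => ?_)
    rw [uIcc_of_le hy] at hz
    exact Or.inl (by linarith [hz.1])
  · have hz0 := hz.1
    rw [rho_eq_mul_rhoRatio, mul_inv, ← Real.rpow_neg (by linarith), mul_left_comm]
    refine mul_le_of_le_one_right (by positivity) ?_
    rw [← div_eq_mul_inv, div_le_one (rhoRatio_pos hz0)]
    exact rhoRatio_antitoneOn hz0 (hz0.trans hz.2) hz.2

end Weights

theorem stmt3_general (m α : ℝ) (hm : 1/2 < m) (j : ℕ) (f : ℝ → ℝ)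
    (hint : Integrable (fun z => f z ^ 2 * rho m α j z) (volume.restrict (Set.Ioi 0))) :
    ∀ y : ℝ, 0 ≤ y →
      Real.sqrt (rho m α j y / rho m α 0 y) * ∫ z in (0:ℝ)..y, |f z|
        ≤ Real.sqrt (1 / (2 * m - 1)) *
          Real.sqrt (∫ z in Set.Ioi (0:ℝ), f z ^ 2 * rho m α j z) := by
  intro y hy
  have hρ_pos : ∀ᵐ z ∂volume.restrict (Ioc 0 y), 0 < rho m α j z :=
    (ae_restrict_iff' measurableSet_Ioc).2 (ae_of_all _ fun z hz => rho_pos hz.1.le)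
  have cauchySchwarz := integral_abs_le_sqrt_mul_sqrt_of_weight
    ((continuousOn_rho.mono (Ioc_subset_Icc_self.trans Icc_subset_Ici_self)).aestronglyMeasurable
      measurableSet_Ioc) hρ_pos (IntegrableOn.mono_set hint Ioc_subset_Ioi_self)
    ((intervalIntegrable_iff_integrableOn_Ioc_of_le hy).1 (intervalIntegrable_inv_rho hy))
  have hIoc_le_Ioi :
      ∫ z in Ioc 0 y, f z ^ 2 * rho m α j z ≤ ∫ z in Ioi 0, f z ^ 2 * rho m α j z :=
    setIntegral_mono_set hint
      ((ae_restrict_iff' measurableSet_Ioi).2 (ae_of_all _ fun z hz =>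
        mul_nonneg (sq_nonneg _) (rho_pos (le_of_lt hz)).le))
      Ioc_subset_Ioi_self.eventuallyLE
  have hweight := rhoRatio_mul_integral_inv_rho_le (α := α) (j := j) hm hy
  rw [intervalIntegral.integral_of_le hy] at hweight
  rw [rho_div_rho_zero (by linarith), intervalIntegral.integral_of_le hy, mul_comm √(1 / _)]
  calc √(rhoRatio α j y) * ∫ z in Ioc 0 y, |f z|
      ≤ √(rhoRatio α j y) * (√(∫ z in Ioc 0 y, f z ^ 2 * rho m α j z) *
          √(∫ z in Ioc 0 y, (rho m α j z)⁻¹)) := by gcongr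
    _ = √(∫ z in Ioc 0 y, f z ^ 2 * rho m α j z) *
          √(rhoRatio α j y * ∫ z in Ioc 0 y, (rho m α j z)⁻¹) := by
        rw [Real.sqrt_mul (rhoRatio_pos hy).le]; ring
    _ ≤ _ := by gcongr

theorem stmt3 (m α : ℝ) (hm : 1/2 < m) (hα : 0 ≤ α) (j : ℕ) (f : ℝ → ℝ)
    (hf : Measurable f)
    (hint : Integrable (fun z => f z ^ 2 * rho m α j z) (volume.restrict (Set.Ioi 0))) :
    ∀ y : ℝ, 0 ≤ y →
      Real.sqrt (rho m α j y / rho m α 0 y) * ∫ z in (0:ℝ)..y, |f z|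
        ≤ Real.sqrt (1 / (2 * m - 1)) *
          Real.sqrt (∫ z in Set.Ioi (0:ℝ), f z ^ 2 * rho m α j z) :=
  stmt3_general m α hm j f hint
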